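/- arXiv:1211.3621 — 5 statements merged into one kernel-verified Lean document; each statement's English description precedes it below -/
import Mathlib

section
/- Let ψ(σ) = ∫₀^σ log(e + u) du. Then for every constant c > 0, ∫₁^∞ ( ∫₁^t exp( −c ∫ᵣ^t ψ(σ) dσ ) dr ) dt = ∞. -/
/-!
Since `ψ` is nondecreasing, `∫ᵣᵗ ψ ≤ ψ(t) (t - r)`, so the inner integral is at least
`∫₁ᵗ exp(-c ψ(t) (t - r)) dr = (1 - exp(-c ψ(t) (t - 1))) / (c ψ(t))`.
As `t ≤ ψ(t) ≤ t log(e + t)`, for `t ≥ 2` this is at least a constant times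
`1 / ((e + t) log(e + t))`, whose integral `log log(e + t)` diverges.
-/

open MeasureTheory intervalIntegral Filter Real Set

theorem integral_exp_neg_mul_sub {a : ℝ} (ha : a ≠ 0) (b t : ℝ) :
    ∫ r in b..t, exp (-(a * (t - r))) = (1 - exp (-(a * (t - b)))) / a := by
  have h := integral_comp_mul_sub (fun x => exp x) ha (a * t) (a := b) (b := t)
  simp only [integral_exp, smul_eq_mul] at h
  convert h using 1
  · congr 1 with r; ring_nf
  · rw [sub_self, exp_zero]; ring_nf

theorem le_integral_exp_neg_integral {ψ : ℝ → ℝ} {b t c : ℝ} (hbt : b ≤ t)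
    (hψ : MonotoneOn ψ (Icc b t)) (hc : 0 < c) (hψt : 0 < ψ t) :
    (1 - exp (-(c * ψ t * (t - b)))) / (c * ψ t) ≤
      ∫ r in b..t, exp (-(c * ∫ σ in r..t, ψ σ)) := by
  have hψi : ∀ r ∈ Icc b t, IntervalIntegrable ψ volume r t := fun r hr =>
    MonotoneOn.intervalIntegrable <| by
      rw [uIcc_of_le hr.2]; exact hψ.mono (Icc_subset_Icc_left hr.1)
  have hcont : ContinuousOn (fun r => exp (-(c * ∫ σ in r..t, ψ σ))) (uIcc b t) :=
    ((continuousOn_primitive_interval_left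
      ((intervalIntegrable_iff').1 (hψi b ⟨le_rfl, hbt⟩))).const_smul c).neg.rexp
  have hle : ∀ r ∈ Icc b t, ∫ σ in r..t, ψ σ ≤ ψ t * (t - r) := fun r hr => by
    have := integral_mono_on hr.2 (hψi r hr) intervalIntegrable_const
      (fun σ hσ => hψ ⟨hr.1.trans hσ.1, hσ.2⟩ ⟨hbt, le_rfl⟩ hσ.2)
    simpa [mul_comm] using this
  rw [← integral_exp_neg_mul_sub (by positivity)]
  refine integral_mono_on hbt (Continuous.intervalIntegrable (by fun_prop) _ _)
    hcont.intervalIntegrable fun r hr => exp_le_exp.2 ?_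
  linarith [mul_le_mul_of_nonneg_left (hle r hr) hc.le]

theorem continuous_integral_exp_neg_integral {ψ : ℝ → ℝ} (hψ : Continuous ψ) (b c : ℝ) :
    Continuous fun t => ∫ r in b..t, exp (-(c * ∫ σ in r..t, ψ σ)) := by
  set Ψ := fun x => ∫ σ in b..x, ψ σ
  have hΨ : Continuous Ψ := continuous_primitive (fun _ _ => hψ.intervalIntegrable _ _) b
  have hfactor : ∀ t, ∫ r in b..t, exp (-(c * ∫ σ in r..t, ψ σ)) =
      exp (-(c * Ψ t)) * ∫ r in b..t, exp (c * Ψ r) := by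
    intro t
    rw [← intervalIntegral.integral_const_mul]
    congr 1 with r
    rw [← integral_interval_sub_left (hψ.intervalIntegrable b t) (hψ.intervalIntegrable b r),
      ← exp_add]
    simp only [Ψ]
    ring_nf
  simp only [hfactor]
  exact (hΨ.const_mul c).neg.rexp.mul
    (continuous_primitive (fun _ _ => (hΨ.const_mul c).rexp.intervalIntegrable _ _) b)

theorem tendsto_integral_inv_div_log_atTop {a : ℝ} (ha : 1 < a) :
    Tendsto (fun x => ∫ t in a..x, t⁻¹ / log t) atTop atTop := by
  have h : Tendsto (fun x => log (log x) - log (log a)) atTop atTop :=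
    tendsto_atTop_add_const_right _ _ (tendsto_log_atTop.comp tendsto_log_atTop)
  refine h.congr' ?_
  filter_upwards [eventually_gt_atTop 1] with x hx
  exact (integral_inv_div_log ha hx).symm

noncomputable def psi (σ : ℝ) : ℝ := ∫ u in (0:ℝ)..σ, log (exp 1 + u)

theorem intervalIntegrable_log_exp_one_add (a b : ℝ) :
    IntervalIntegrable (fun u => log (exp 1 + u)) volume a b := by
  simpa using (intervalIntegrable_log' (a := exp 1 + a) (b := exp 1 + b)).comp_add_left (exp 1)

theorem continuous_psi : Continuous psi :=
  continuous_primitive intervalIntegrable_log_exp_one_add 0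

theorem one_le_log_exp_one_add {u : ℝ} (hu : 0 ≤ u) : 1 ≤ log (exp 1 + u) := by
  rw [le_log_iff_exp_le (by positivity)]
  linarith

theorem monotoneOn_psi : MonotoneOn psi (Ici 0) := fun a ha b _ hab => by
  rw [psi, psi, ← sub_nonneg, integral_interval_sub_left (intervalIntegrable_log_exp_one_add _ _)
    (intervalIntegrable_log_exp_one_add _ _)]
  exact integral_nonneg hab fun u hu =>
    zero_le_one.trans (one_le_log_exp_one_add (ha.trans hu.1))

theorem le_psi {t : ℝ} (ht : 0 ≤ t) : t ≤ psi t := by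
  have := integral_mono_on ht intervalIntegrable_const (intervalIntegrable_log_exp_one_add 0 t)
    fun u hu => one_le_log_exp_one_add hu.1
  rwa [intervalIntegral.integral_const, smul_eq_mul, sub_zero, mul_one] at this

theorem psi_le {t : ℝ} (ht : 0 ≤ t) : psi t ≤ t * log (exp 1 + t) := by
  have := integral_mono_on ht (intervalIntegrable_log_exp_one_add 0 t) intervalIntegrable_const
    fun u hu => log_le_log (by linarith [exp_pos 1, hu.1]) (add_le_add_right hu.2 _)
  rwa [intervalIntegral.integral_const, smul_eq_mul, sub_zero] at this

theorem inv_div_log_le_integral_exp_neg_integral_psi {c t : ℝ} (hc : 0 < c) (ht : 2 ≤ t) :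
    (1 - exp (-(2 * c))) / c * ((exp 1 + t)⁻¹ / log (exp 1 + t)) ≤
      ∫ r in (1:ℝ)..t, exp (-(c * ∫ σ in r..t, psi σ)) := by
  have hψt : t ≤ psi t := le_psi (by linarith)
  have hlog : 1 ≤ log (exp 1 + t) := one_le_log_exp_one_add (by linarith)
  have h2c : 2 * c ≤ c * psi t * (t - 1) := by
    have : 2 ≤ psi t * (t - 1) := by nlinarith
    nlinarith
  calc (1 - exp (-(2 * c))) / c * ((exp 1 + t)⁻¹ / log (exp 1 + t))
      = (1 - exp (-(2 * c))) / (c * ((exp 1 + t) * log (exp 1 + t))) := by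
        field_simp
    _ ≤ (1 - exp (-(c * psi t * (t - 1)))) / (c * psi t) := by
        refine div_le_div₀ (by simp only [sub_nonneg, exp_le_one_iff, neg_nonpos]; linarith)
          (sub_le_sub_left (exp_le_exp.2 (neg_le_neg h2c)) 1) (by nlinarith) ?_
        gcongr
        calc psi t ≤ t * log (exp 1 + t) := psi_le (by linarith)
          _ ≤ (exp 1 + t) * log (exp 1 + t) := by gcongr; linarith [exp_pos 1]
    _ ≤ ∫ r in (1:ℝ)..t, exp (-(c * ∫ σ in r..t, psi σ)) :=
        le_integral_exp_neg_integral (by linarith)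
          (monotoneOn_psi.mono fun _ h => zero_le_one.trans h.1) hc (by linarith)

theorem tendsto_integral_inv_div_log_exp_one_add_atTop :
    Tendsto (fun x => ∫ t in (2:ℝ)..x, (exp 1 + t)⁻¹ / log (exp 1 + t)) atTop atTop := by
  simp only [integral_comp_add_left (fun t => t⁻¹ / log t)]
  exact (tendsto_integral_inv_div_log_atTop (by linarith [add_one_le_exp 1])).comp
    (tendsto_atTop_add_const_left _ _ tendsto_id)

/-- Condition (1.1) holds for `ψ σ = ∫₀^σ log(e + u) du`, uniformly in the constant `c > 0`:
`∫₁^∞ ∫₁ᵗ exp(-c ∫ᵣᵗ ψ(σ) dσ) dr dt = ∞`. -/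
theorem stmt_2 (c : ℝ) (hc : 0 < c) :
    Tendsto (fun x : ℝ => ∫ t in (1:ℝ)..x, ∫ r in (1:ℝ)..t,
      Real.exp (-(c * ∫ σ in r..t, ∫ u in (0:ℝ)..σ, Real.log (Real.exp 1 + u))))
      atTop atTop := by
  change Tendsto
    (fun x => ∫ t in (1:ℝ)..x, ∫ r in (1:ℝ)..t, exp (-(c * ∫ σ in r..t, psi σ))) atTop atTop
  set K := (1 - exp (-(2 * c))) / c
  have hK : 0 < K := div_pos (sub_pos.2 (exp_lt_one_iff.2 (by linarith))) hc
  have hG := continuous_integral_exp_neg_integral continuous_psi 1 c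
  have hg : ContinuousOn (fun t => K * ((exp 1 + t)⁻¹ / log (exp 1 + t))) (Ici 2) := by
    fun_prop (disch := grind [log_pos, add_one_le_exp])
  refine tendsto_atTop_mono' atTop ?_
    (tendsto_integral_inv_div_log_exp_one_add_atTop.const_mul_atTop hK)
  filter_upwards [eventually_ge_atTop 2] with x hx
  calc K * ∫ t in (2:ℝ)..x, (exp 1 + t)⁻¹ / log (exp 1 + t)
      = ∫ t in (2:ℝ)..x, K * ((exp 1 + t)⁻¹ / log (exp 1 + t)) :=
        (intervalIntegral.integral_const_mul _ _).symm
    _ ≤ ∫ t in (2:ℝ)..x, ∫ r in (1:ℝ)..t, exp (-(c * ∫ σ in r..t, psi σ)) :=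
        integral_mono_on hx
          (hg.mono (by simp [uIcc_of_le hx, Icc_subset_Ici_self])).intervalIntegrable
          (hG.intervalIntegrable _ _)
          fun t ht => inv_div_log_le_integral_exp_neg_integral_psi hc ht.1
    _ ≤ ∫ t in (1:ℝ)..x, ∫ r in (1:ℝ)..t, exp (-(c * ∫ σ in r..t, psi σ)) :=
        integral_mono_interval one_le_two hx le_rfl
          (ae_restrict_of_forall_mem measurableSet_Ioc fun t ht =>
            integral_nonneg ht.1.le fun _ _ => (exp_pos _).le)
          (hG.intervalIntegrable _ _)
end

section
/- For every constant c > 0, ∫₁^∞ ( ∫₁^t exp( −c ∫ᵣ^t (1 + σ) log(e + σ) dσ ) dr ) dt = ∞. -/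
open MeasureTheory intervalIntegral Filter

/-!
For `ψ` nondecreasing on `[1, ∞)`, the inner integral `∫₁ᵗ exp (-∫ᵣᵗ ψ) dr` is at least
`1 / (e ψ(t))` once `t - 1/ψ(t) ≥ 1`: on the window `[t - 1/ψ(t), t]` one has
`∫ᵣᵗ ψ ≤ (t - r) ψ(t) ≤ 1`. So condition (1.1) follows from `∫^∞ 1/ψ = ∞`. For
`ψ(σ) = c (1 + σ) log(e + σ) ≤ c (e + σ) log(e + σ)`, the integrand `1/ψ` dominates
`c⁻¹` times the derivative of `log (log (e + σ))`, which tends to infinity.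
-/

open Set Real

section MonotoneWeight

variable {ψ : ℝ → ℝ}

theorem MonotoneOn.intervalIntegrable_of_one_le (hψ : MonotoneOn ψ (Ici 1)) {a b : ℝ}
    (ha : 1 ≤ a) (hb : 1 ≤ b) : IntervalIntegrable ψ volume a b :=
  (hψ.mono fun _ hx => (le_min ha hb).trans hx.1).intervalIntegrable

theorem MonotoneOn.antitoneOn_inv_of_pos {s : Set ℝ} (hψ : MonotoneOn ψ s)
    (hpos : ∀ x ∈ s, 0 < ψ x) : AntitoneOn (fun x => (ψ x)⁻¹) s :=
  fun _ ha _ hb hab => inv_anti₀ (hpos _ ha) (hψ ha hb hab)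

theorem integral_le_sub_mul_of_monotoneOn (hψ : MonotoneOn ψ (Ici 1)) {r t : ℝ}
    (hr : 1 ≤ r) (hrt : r ≤ t) : ∫ σ in r..t, ψ σ ≤ (t - r) * ψ t := by
  calc ∫ σ in r..t, ψ σ ≤ ∫ _ in r..t, ψ t :=
        integral_mono_on hrt (hψ.intervalIntegrable_of_one_le hr (hr.trans hrt))
          intervalIntegrable_const fun σ hσ => hψ (hr.trans hσ.1) (hr.trans hrt) hσ.2
    _ = (t - r) * ψ t := by rw [intervalIntegral.integral_const, smul_eq_mul]

theorem integral_exp_neg_integral_eq (hψ : MonotoneOn ψ (Ici 1)) {t : ℝ} (ht : 1 ≤ t) :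
    ∫ r in 1..t, exp (-∫ σ in r..t, ψ σ) =
      exp (-∫ σ in 1..t, ψ σ) * ∫ r in 1..t, exp (∫ σ in 1..r, ψ σ) := by
  rw [← intervalIntegral.integral_const_mul]
  refine integral_congr fun r hr => ?_
  rw [uIcc_of_le ht] at hr
  rw [← integral_interval_sub_left (hψ.intervalIntegrable_of_one_le le_rfl ht)
    (hψ.intervalIntegrable_of_one_le le_rfl hr.1), ← exp_add]
  ring_nf

theorem continuousOn_integral_exp_neg_integral (hψ : MonotoneOn ψ (Ici 1)) {x : ℝ}
    (hx : 1 ≤ x) :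
    ContinuousOn (fun t => ∫ r in 1..t, exp (-∫ σ in r..t, ψ σ)) (Icc 1 x) := by
  have hΦ : ContinuousOn (fun t => ∫ σ in 1..t, ψ σ) (Icc 1 x) := by
    simpa only [uIcc_of_le hx] using continuousOn_primitive_interval'
      (hψ.intervalIntegrable_of_one_le le_rfl hx) left_mem_uIcc
  have hG : ContinuousOn (fun t => ∫ r in 1..t, exp (∫ σ in 1..r, ψ σ)) (Icc 1 x) := by
    simpa only [uIcc_of_le hx, Function.comp_def] using continuousOn_primitive_interval'
      ((continuous_exp.comp_continuousOn hΦ).intervalIntegrable_of_Icc hx) left_mem_uIcc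
  refine ((continuous_exp.comp_continuousOn hΦ.neg).mul hG).congr fun t ht => ?_
  exact integral_exp_neg_integral_eq hψ ht.1

theorem inv_exp_one_mul_le_integral_exp_neg_integral (hψ : MonotoneOn ψ (Ici 1)) {t : ℝ}
    (hψt : 0 < ψ t) (ht : 1 ≤ t - (ψ t)⁻¹) :
    (exp 1 * ψ t)⁻¹ ≤ ∫ r in 1..t, exp (-∫ σ in r..t, ψ σ) := by
  have hinv_pos : 0 < (ψ t)⁻¹ := inv_pos.2 hψt
  have h1t : 1 ≤ t := by linarith
  have hf : ContinuousOn (fun r => exp (-∫ σ in r..t, ψ σ)) (Icc 1 t) := by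
    refine continuous_exp.comp_continuousOn (ContinuousOn.neg ?_)
    simpa only [uIcc_of_le h1t] using continuousOn_primitive_interval_left
      ((hψ.mono fun _ hr => (le_min le_rfl h1t).trans hr.1).integrableOn_isCompact isCompact_uIcc)
  have hexp_ge : ∀ r ∈ Icc (t - (ψ t)⁻¹) t, exp (-1) ≤ exp (-∫ σ in r..t, ψ σ) := by
    intro r hr
    refine exp_le_exp.2 (neg_le_neg ?_)
    calc ∫ σ in r..t, ψ σ ≤ (t - r) * ψ t :=
          integral_le_sub_mul_of_monotoneOn hψ (ht.trans hr.1) hr.2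
      _ ≤ (ψ t)⁻¹ * ψ t := mul_le_mul_of_nonneg_right (by linarith [hr.1]) hψt.le
      _ = 1 := inv_mul_cancel₀ hψt.ne'
  calc (exp 1 * ψ t)⁻¹ = ∫ _ in t - (ψ t)⁻¹..t, exp (-1) := by
        rw [intervalIntegral.integral_const, smul_eq_mul, exp_neg, mul_inv]; ring
    _ ≤ ∫ r in t - (ψ t)⁻¹..t, exp (-∫ σ in r..t, ψ σ) :=
        integral_mono_on (by linarith) intervalIntegrable_const
          ((hf.mono (Icc_subset_Icc_left ht)).intervalIntegrable_of_Icc (by linarith)) hexp_ge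
    _ ≤ ∫ r in 1..t, exp (-∫ σ in r..t, ψ σ) :=
        integral_mono_interval ht (by linarith) le_rfl
          (Eventually.of_forall fun _ => (exp_pos _).le) (hf.intervalIntegrable_of_Icc h1t)

theorem tendsto_integral_integral_exp_neg_integral_atTop (hψ : MonotoneOn ψ (Ici 1))
    (hψ1 : 0 < ψ 1) (hdiv : Tendsto (fun x => ∫ t in 1..x, (ψ t)⁻¹) atTop atTop) :
    Tendsto (fun x => ∫ t in 1..x, ∫ r in 1..t, exp (-∫ σ in r..t, ψ σ)) atTop atTop := by
  set T := 1 + (ψ 1)⁻¹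
  have hT : 1 ≤ T := le_add_of_nonneg_right (inv_nonneg.2 hψ1.le)
  have hpos : ∀ t ∈ Ici 1, 0 < ψ t := fun t ht => hψ1.trans_le (hψ self_mem_Ici ht ht)
  have hinv : ∀ {a b}, 1 ≤ a → 1 ≤ b → IntervalIntegrable (fun t => (ψ t)⁻¹) volume a b :=
    fun ha hb => ((hψ.antitoneOn_inv_of_pos hpos).mono
      fun _ hx => (le_min ha hb).trans hx.1).intervalIntegrable
  have hbound : ∀ t, T ≤ t → (exp 1)⁻¹ * (ψ t)⁻¹ ≤ ∫ r in 1..t, exp (-∫ σ in r..t, ψ σ) := by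
    intro t ht
    have hψt := hpos t (hT.trans ht)
    rw [← mul_inv]
    refine inv_exp_one_mul_le_integral_exp_neg_integral hψ hψt ?_
    have : (ψ t)⁻¹ ≤ (ψ 1)⁻¹ := inv_anti₀ hψ1 (hψ self_mem_Ici (hT.trans ht) (hT.trans ht))
    linarith
  refine tendsto_atTop_mono' atTop ?_ ((tendsto_atTop_add_const_right atTop
    (-∫ t in 1..T, (ψ t)⁻¹) hdiv).const_mul_atTop (inv_pos.2 (exp_pos 1)))
  filter_upwards [eventually_ge_atTop T] with x hx
  have hF := continuousOn_integral_exp_neg_integral hψ (hT.trans hx)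
  calc (exp 1)⁻¹ * ((∫ t in 1..x, (ψ t)⁻¹) + -∫ t in 1..T, (ψ t)⁻¹)
        = ∫ t in T..x, (exp 1)⁻¹ * (ψ t)⁻¹ := by
          rw [intervalIntegral.integral_const_mul, ← sub_eq_add_neg,
            integral_interval_sub_left (hinv le_rfl (hT.trans hx)) (hinv le_rfl hT)]
    _ ≤ ∫ t in T..x, ∫ r in 1..t, exp (-∫ σ in r..t, ψ σ) :=
        integral_mono_on hx ((hinv hT (hT.trans hx)).const_mul _)
          ((hF.mono (Icc_subset_Icc_left hT)).intervalIntegrable_of_Icc hx)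
          fun t ht => hbound t ht.1
    _ ≤ ∫ t in 1..x, ∫ r in 1..t, exp (-∫ σ in r..t, ψ σ) :=
        integral_mono_interval hT hx le_rfl
          ((ae_restrict_iff' measurableSet_Ioc).2 (Eventually.of_forall fun t ht =>
            integral_nonneg ht.1.le fun _ _ => (exp_pos _).le))
          (hF.intervalIntegrable_of_Icc (hT.trans hx))

end MonotoneWeight

theorem monotoneOn_add_mul_log_exp_one_add {a : ℝ} (ha : -1 ≤ a) :
    MonotoneOn (fun σ => (a + σ) * log (exp 1 + σ)) (Ici 1) := by
  have he := exp_pos 1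
  refine MonotoneOn.mul (fun _ _ _ _ h => by linarith) (fun x hx y _ h => ?_)
    (fun x hx => by linarith [mem_Ici.1 hx]) (fun x hx => log_nonneg (by linarith [mem_Ici.1 hx]))
  exact log_le_log (by linarith [mem_Ici.1 hx]) (by linarith)

theorem hasDerivAt_log_log_exp_one_add {t : ℝ} (ht : 0 ≤ t) :
    HasDerivAt (fun s => log (log (exp 1 + s))) ((exp 1 + t) * log (exp 1 + t))⁻¹ t := by
  have he : 1 < exp 1 + t := by linarith [add_one_le_exp (1 : ℝ)]
  have hlog : HasDerivAt (fun s => log (exp 1 + s)) (exp 1 + t)⁻¹ t := by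
    simpa using ((hasDerivAt_id' t).const_add (exp 1)).log (by linarith)
  convert hlog.log (log_pos he).ne' using 1
  rw [mul_inv, div_eq_mul_inv, mul_comm]

theorem tendsto_integral_inv_one_add_mul_log_atTop :
    Tendsto (fun x => ∫ t in 1..x, ((1 + t) * log (exp 1 + t))⁻¹) atTop atTop := by
  have he := exp_pos 1
  have hlog : ∀ t ∈ Ici (1 : ℝ), 0 < log (exp 1 + t) :=
    fun t ht => log_pos (by linarith [mem_Ici.1 ht])
  have hpos : ∀ a : ℝ, 0 < a → ∀ t ∈ Ici (1 : ℝ), 0 < (a + t) * log (exp 1 + t) :=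
    fun a ha t ht => mul_pos (by linarith [mem_Ici.1 ht]) (hlog t ht)
  have hint : ∀ a : ℝ, 0 < a → ∀ x : ℝ, 1 ≤ x →
      IntervalIntegrable (fun t => ((a + t) * log (exp 1 + t))⁻¹) volume 1 x :=
    fun a ha x hx => (((monotoneOn_add_mul_log_exp_one_add (by linarith)).antitoneOn_inv_of_pos
      (hpos a ha)).mono fun _ hy => (le_min le_rfl hx).trans hy.1).intervalIntegrable
  have hLL : Tendsto (fun x => log (log (exp 1 + x))) atTop atTop :=
    tendsto_log_atTop.comp (tendsto_log_atTop.comp (tendsto_atTop_add_const_left _ _ tendsto_id))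
  refine tendsto_atTop_mono' atTop ?_
    (tendsto_atTop_add_const_right atTop (-log (log (exp 1 + 1))) hLL)
  filter_upwards [eventually_ge_atTop 1] with x hx
  calc log (log (exp 1 + x)) + -log (log (exp 1 + 1))
        = ∫ t in 1..x, ((exp 1 + t) * log (exp 1 + t))⁻¹ := by
          rw [integral_eq_sub_of_hasDerivAt (fun t ht => hasDerivAt_log_log_exp_one_add
            (by rw [uIcc_of_le hx] at ht; linarith [ht.1])) (hint _ he x hx)]
          ring
    _ ≤ ∫ t in 1..x, ((1 + t) * log (exp 1 + t))⁻¹ :=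
        integral_mono_on hx (hint _ he x hx) (hint 1 one_pos x hx) fun t ht =>
          inv_anti₀ (hpos 1 one_pos t ht.1) (mul_le_mul_of_nonneg_right
            (by linarith [add_one_le_exp (1 : ℝ)]) (hlog t ht.1).le)

/-- Condition (1.1) holds for `ψ σ = (1 + σ) log(e + σ)`, uniformly in the constant `c > 0`:
`∫₁^∞ ∫₁ᵗ exp(-c ∫ᵣᵗ (1+σ) log(e+σ) dσ) dr dt = ∞`. -/
theorem stmt_3 (c : ℝ) (hc : 0 < c) :
    Tendsto (fun x : ℝ => ∫ t in (1:ℝ)..x, ∫ r in (1:ℝ)..t,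
      Real.exp (-(c * ∫ σ in r..t, (1 + σ) * Real.log (Real.exp 1 + σ))))
      atTop atTop := by
  have hmono : MonotoneOn (fun σ => c * ((1 + σ) * log (exp 1 + σ))) (Ici 1) :=
    fun _ hx _ hy hxy => mul_le_mul_of_nonneg_left
      (monotoneOn_add_mul_log_exp_one_add (by norm_num) hx hy hxy) hc.le
  have hψ1 : 0 < c * ((1 + 1) * log (exp 1 + 1)) :=
    mul_pos hc (mul_pos (by norm_num) (log_pos (by linarith [exp_pos 1])))
  have hdiv : Tendsto (fun x => ∫ t in 1..x, (c * ((1 + t) * log (exp 1 + t)))⁻¹) atTop atTop := by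
    simp_rw [mul_inv c, intervalIntegral.integral_const_mul]
    exact tendsto_integral_inv_one_add_mul_log_atTop.const_mul_atTop (inv_pos.2 hc)
  simp_rw [← intervalIntegral.integral_const_mul]
  exact tendsto_integral_integral_exp_neg_integral_atTop hmono hψ1 hdiv
end

section
/- Let E be a nontrivial finite-dimensional real inner product space, let 0 ≤ r ≤ T, let A : [r,T] → L(E,E) be a continuous family of linear operators on E, and let k : [r,T] → ℝ be continuous such that ⟨A(t)v, v⟩ ≥ k(t)‖v‖² for all t ∈ [r,T] and all v ∈ E. Suppose Q : [r,T] → L(E,E) is differentiable with Q(r) = id and Q'(t) = −A(t) ∘ Q(t) for all t ∈ [r,T]. Then the operator norm of Q(t) satisfies ‖Q(t)‖ ≤ exp( −∫ᵣ^t k(s) ds ) for every t ∈ [r,T]. -/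
/-! With `K t = ∫ᵣᵗ k` and `u t = Q t v`, the Lyapunov function `exp (2 K t) * ‖u t‖²` has
derivative `2 exp (2 K t) (k t ‖u t‖² - ⟪A t (u t), u t⟫) ≤ 0`, so it is nonincreasing and
`‖Q t v‖² ≤ exp (-2 K t) ‖v‖²`. -/

open MeasureTheory intervalIntegral RealInnerProductSpace

section

open Set Real

variable {E : Type*} [NormedAddCommGroup E] [InnerProductSpace ℝ E]

theorem ContinuousOn.hasDerivAt_integral_of_mem_Ioo {k : ℝ → ℝ} {a b x : ℝ}
    (hk : ContinuousOn k (Icc a b)) (hx : x ∈ Ioo a b) :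
    HasDerivAt (fun t => ∫ s in a..t, k s) (k x) x := by
  have hIoo : ContinuousOn k (Ioo a b) := hk.mono Ioo_subset_Icc_self
  refine integral_hasDerivAt_right ?_ (hIoo.stronglyMeasurableAtFilter isOpen_Ioo x hx)
    (hIoo.continuousAt (isOpen_Ioo.mem_nhds hx))
  exact (hk.mono (uIcc_of_le hx.1.le ▸ Icc_subset_Icc_right hx.2.le)).intervalIntegrable

theorem antitoneOn_exp_integral_mul_norm_sq {u u' : ℝ → E} {k : ℝ → ℝ} {a b : ℝ}
    (hk : ContinuousOn k (Icc a b)) (hu : ContinuousOn u (Icc a b))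
    (hu' : ∀ t ∈ Ioo a b, HasDerivAt u (u' t) t)
    (hdiss : ∀ t ∈ Ioo a b, k t * ‖u t‖ ^ 2 ≤ -⟪u t, u' t⟫) :
    AntitoneOn (fun t => exp (2 * ∫ s in a..t, k s) * ‖u t‖ ^ 2) (Icc a b) := by
  have hK : ContinuousOn (fun t => ∫ s in a..t, k s) (Icc a b) := by
    rcases le_or_gt a b with hab | hba
    · rw [← uIcc_of_le hab] at hk ⊢
      exact continuousOn_primitive_interval hk.integrableOn_uIcc
    · simp [Icc_eq_empty_of_lt hba]
  refine antitoneOn_of_hasDerivWithinAt_nonpos (convex_Icc a b)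
    (((continuousOn_const.mul hK).rexp).mul (hu.norm.pow 2)) (fun t ht => ?_) (fun t ht => ?_)
    (f' := fun t => exp (2 * ∫ s in a..t, k s) * (2 * k t * ‖u t‖ ^ 2 + 2 * ⟪u t, u' t⟫))
  · rw [interior_Icc] at ht
    have hφ := ((hk.hasDerivAt_integral_of_mem_Ioo ht).const_mul 2).exp.mul (hu' t ht).norm_sq
    exact (hφ.congr_deriv (by ring)).hasDerivWithinAt
  · rw [interior_Icc] at ht
    nlinarith [hdiss t ht, exp_pos (2 * ∫ s in a..t, k s)]

theorem norm_le_exp_neg_integral_mul_norm {u u' : ℝ → E} {k : ℝ → ℝ} {a b : ℝ}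
    (hk : ContinuousOn k (Icc a b)) (hu : ContinuousOn u (Icc a b))
    (hu' : ∀ t ∈ Ioo a b, HasDerivAt u (u' t) t)
    (hdiss : ∀ t ∈ Ioo a b, k t * ‖u t‖ ^ 2 ≤ -⟪u t, u' t⟫) :
    ∀ t ∈ Icc a b, ‖u t‖ ≤ exp (-∫ s in a..t, k s) * ‖u a‖ := by
  intro t ht
  have hdecay := antitoneOn_exp_integral_mul_norm_sq hk hu hu' hdiss
    (left_mem_Icc.2 (ht.1.trans ht.2)) ht ht.1
  have hsq : (exp (∫ s in a..t, k s) * ‖u t‖) ^ 2 ≤ ‖u a‖ ^ 2 := by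
    simpa [mul_pow, ← exp_nat_mul] using hdecay
  rw [exp_neg, inv_mul_eq_div, le_div_iff₀' (exp_pos _)]
  exact (pow_le_pow_iff_left₀ (by positivity) (norm_nonneg _) two_ne_zero).1 hsq

end

theorem stmt_4_general {E : Type*} [NormedAddCommGroup E] [InnerProductSpace ℝ E]
    (r T : ℝ)
    (A : ℝ → E →L[ℝ] E)
    (k : ℝ → ℝ) (hk : ContinuousOn k (Set.Icc r T))
    (hAk : ∀ t ∈ Set.Icc r T, ∀ v : E, k t * ‖v‖ ^ 2 ≤ ⟪(A t) v, v⟫)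
    (Q : ℝ → E →L[ℝ] E) (hQr : Q r = ContinuousLinearMap.id ℝ E)
    (hQ : ∀ t ∈ Set.Icc r T,
      HasDerivWithinAt Q (-((A t).comp (Q t))) (Set.Icc r T) t) :
    ∀ t ∈ Set.Icc r T, ‖Q t‖ ≤ Real.exp (-(∫ s in r..t, k s)) := by
  intro t ht
  refine ContinuousLinearMap.opNorm_le_bound _ (Real.exp_nonneg _) fun v => ?_
  have hQv_cont : ContinuousOn (fun s => Q s v) (Set.Icc r T) := fun s hs =>
    (hQ s hs).continuousWithinAt.clm_apply continuousWithinAt_const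
  have hQv_deriv : ∀ s ∈ Set.Ioo r T, HasDerivAt (fun s => Q s v) (-A s (Q s v)) s := by
    intro s hs
    simpa using ((hQ s (Set.Ioo_subset_Icc_self hs)).hasDerivAt
      (Icc_mem_nhds hs.1 hs.2)).clm_apply (hasDerivAt_const s v)
  have hdiss : ∀ s ∈ Set.Ioo r T, k s * ‖Q s v‖ ^ 2 ≤ -⟪Q s v, -A s (Q s v)⟫ := by
    intro s hs
    simpa [real_inner_comm] using hAk s (Set.Ioo_subset_Icc_self hs) (Q s v)
  simpa [hQr] using norm_le_exp_neg_integral_mul_norm hk hQv_cont hQv_deriv hdiss t ht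

/-- Norm estimate for the damped parallel transport: if `Q` solves the linear operator ODE
`Q' = -A ∘ Q`, `Q r = id` on `[r, T]`, and `⟨A t v, v⟩ ≥ k t ‖v‖²`, then
`‖Q t‖ ≤ exp(-∫ᵣᵗ k)`. -/
theorem stmt_4 {E : Type*} [NormedAddCommGroup E] [InnerProductSpace ℝ E]
    [FiniteDimensional ℝ E] [Nontrivial E]
    (r T : ℝ) (h0r : 0 ≤ r) (hrT : r ≤ T)
    (A : ℝ → E →L[ℝ] E) (hA : ContinuousOn A (Set.Icc r T))
    (k : ℝ → ℝ) (hk : ContinuousOn k (Set.Icc r T))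
    (hAk : ∀ t ∈ Set.Icc r T, ∀ v : E, k t * ‖v‖ ^ 2 ≤ ⟪(A t) v, v⟫)
    (Q : ℝ → E →L[ℝ] E) (hQr : Q r = ContinuousLinearMap.id ℝ E)
    (hQ : ∀ t ∈ Set.Icc r T,
      HasDerivWithinAt Q (-((A t).comp (Q t))) (Set.Icc r T) t) :
    ∀ t ∈ Set.Icc r T, ‖Q t‖ ≤ Real.exp (-(∫ s in r..t, k s)) :=
  stmt_4_general r T A k hk hAk Q hQr hQ
end

section
/- Let t > 0, let K : [0,t] → ℝ be continuous, and set A(s) = ∫₀^s exp( 2∫₀^r K(u) du ) dr for s ∈ [0,t]. For every ε > 0 there exists a unique r(ε) ∈ (0,t) such that A(r(ε)) = A(t)/(1 + 2ε), and lim_{ε→0⁺} (t − r(ε))/ε = 2∫₀^t exp( −2∫ᵤ^t K(τ) dτ ) du. -/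
/-!
`A` is a continuous, strictly increasing primitive of `g r = exp (2 ∫₀ʳ K)` with `A 0 = 0`, so
the level `A t / (1 + 2ε)` is attained exactly once in `(0, t)`, and `r ε → t⁻` as `ε → 0⁺`.
Factor `(t - r ε) / ε` as `(t - r ε) / (A t - A (r ε))` times `(A t - A (r ε)) / ε`: the first
factor tends to `1 / A'(t⁻) = 1 / g t` and the second equals `2 A t / (1 + 2ε) → 2 A t`.
Finally `A t / g t = ∫₀ᵗ g u / g t du = ∫₀ᵗ exp (-2 ∫ᵤᵗ K)`.
-/

open MeasureTheory intervalIntegral Filter Set Topology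

theorem StrictMonoOn.existsUnique_mem_Ioo_eq {α β : Type*} [ConditionallyCompleteLinearOrder α]
    [TopologicalSpace α] [OrderTopology α] [DenselyOrdered α] [LinearOrder β] [TopologicalSpace β]
    [OrderClosedTopology β] {f : α → β} {a b : α} (hf : StrictMonoOn f (Icc a b))
    (hcont : ContinuousOn f (Icc a b)) (hab : a ≤ b) {y : β} (hy : y ∈ Ioo (f a) (f b)) :
    ∃! x, x ∈ Ioo a b ∧ f x = y := by
  obtain ⟨x, hx, rfl⟩ := intermediate_value_Ioo hab hcont hy
  exact ⟨x, ⟨hx, rfl⟩, fun x' ⟨hx', hfx'⟩ =>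
    hf.injOn (Ioo_subset_Icc_self hx') (Ioo_subset_Icc_self hx) hfx'⟩

theorem StrictMonoOn.tendsto_nhdsLT_of_tendsto_comp {α β ι : Type*} [LinearOrder α]
    [TopologicalSpace α] [OrderTopology α] [LinearOrder β] [TopologicalSpace β]
    [OrderClosedTopology β] {f : α → β} {a b : α} (hf : StrictMonoOn f (Icc a b))
    {l : Filter ι} {x : ι → α} (hx : ∀ᶠ i in l, x i ∈ Ico a b)
    (hfx : Tendsto (f ∘ x) l (𝓝 (f b))) : Tendsto x l (𝓝[<] b) := by
  refine tendsto_nhdsWithin_iff.2 ⟨tendsto_order.2 ⟨fun c hcb => ?_, fun c hbc => ?_⟩,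
    hx.mono fun i hi => hi.2⟩
  · rcases lt_or_ge c a with hca | hac
    · exact hx.mono fun i hi => hca.trans_le hi.1
    have hc : c ∈ Icc a b := ⟨hac, hcb.le⟩
    have hfc : f c < f b := hf hc (right_mem_Icc.2 (hac.trans hcb.le)) hcb
    filter_upwards [hx, hfx.eventually (Ioi_mem_nhds hfc)] with i hi hfi
    exact hf.monotoneOn.reflect_lt hc (Ico_subset_Icc_self hi) hfi
  · exact hx.mono fun i hi => hi.2.trans hbc

theorem HasDerivWithinAt.tendsto_inv_slope {𝕜 ι : Type*} [NontriviallyNormedField 𝕜]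
    {f : 𝕜 → 𝕜} {f' b : 𝕜} {s : Set 𝕜} (hf : HasDerivWithinAt f f' s b) (hf' : f' ≠ 0)
    {l : Filter ι} {x : ι → 𝕜} (hx : Tendsto x l (𝓝[s \ {b}] b)) :
    Tendsto (fun i => (b - x i) / (f b - f (x i))) l (𝓝 f'⁻¹) :=
  ((hasDerivWithinAt_iff_tendsto_slope.1 hf).comp hx |>.inv₀ hf').congr fun i => by
    simp only [Function.comp_apply, slope_def_field, inv_div, ← neg_sub (f b), ← neg_sub b,
      neg_div_neg_eq]

theorem ContinuousOn.continuousOn_primitive_Icc {E : Type*} [NormedAddCommGroup E]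
    [NormedSpace ℝ E] {f : ℝ → E} {a b : ℝ} (hf : ContinuousOn f (Icc a b)) (hab : a ≤ b) :
    ContinuousOn (fun x => ∫ t in a..x, f t) (Icc a b) := by
  simpa only [uIcc_of_le hab] using
    continuousOn_primitive_interval' (hf.intervalIntegrable_of_Icc hab) left_mem_uIcc

theorem strictMonoOn_primitive_of_pos {g : ℝ → ℝ} {a b : ℝ} (hg : ContinuousOn g (Icc a b))
    (hpos : ∀ x ∈ Ioo a b, 0 < g x) : StrictMonoOn (fun s => ∫ x in a..s, g x) (Icc a b) := by
  intro x hx y hy hxy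
  have hint : ∀ {u v}, u ∈ Icc a b → v ∈ Icc a b → IntervalIntegrable g volume u v :=
    fun hu hv => (hg.mono (uIcc_subset_Icc hu hv)).intervalIntegrable
  have hxy_pos : 0 < ∫ u in x..y, g u := intervalIntegral_pos_of_pos_on (hint hx hy)
    (fun u hu => hpos u ⟨hx.1.trans_lt hu.1, hu.2.trans_le hy.2⟩) hxy
  have hsplit := integral_interval_sub_left (hint (left_mem_Icc.2 (hx.1.trans hx.2)) hy)
    (hint (left_mem_Icc.2 (hx.1.trans hx.2)) hx)
  show (∫ u in a..x, g u) < ∫ u in a..y, g u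
  linarith

theorem hasDerivWithinAt_primitive_Iic {g : ℝ → ℝ} {a b : ℝ} (hg : ContinuousOn g (Icc a b))
    (hab : a < b) : HasDerivWithinAt (fun u => ∫ x in a..u, g x) (g b) (Iic b) b := by
  have hgb : ContinuousWithinAt g (Icc a b) b := hg b (right_mem_Icc.2 hab.le)
  rw [ContinuousWithinAt, nhdsWithin_Icc_eq_nhdsLE hab] at hgb
  refine integral_hasDerivWithinAt_right (hg.intervalIntegrable_of_Icc hab.le) ?_ hgb
  rw [← nhdsWithin_Icc_eq_nhdsLE hab]
  exact hg.stronglyMeasurableAtFilter_nhdsWithin measurableSet_Icc b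

theorem integral_exp_neg_mul_integral_eq_div {K : ℝ → ℝ} {a b : ℝ}
    (hK : IntervalIntegrable K volume a b) (c : ℝ) :
    ∫ u in a..b, Real.exp (-(c * ∫ τ in u..b, K τ)) =
      (∫ u in a..b, Real.exp (c * ∫ τ in a..u, K τ)) / Real.exp (c * ∫ τ in a..b, K τ) := by
  rw [← intervalIntegral.integral_div]
  refine integral_congr fun u hu => ?_
  rw [← integral_interval_sub_left hK (hK.mono_set (uIcc_subset_uIcc left_mem_uIcc hu)),
    ← Real.exp_sub]
  ring_nf

/-- Part (e) of the proof of Theorem 4.3: with `A s = ∫₀ˢ exp(2∫₀ʳ K)`, for every `ε > 0` there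
is a unique `r(ε) ∈ (0, t)` with `A (r ε) = A t / (1 + 2ε)`, and
`(t - r ε)/ε → 2 ∫₀ᵗ exp(-2∫ᵤᵗ K(τ) dτ) du` as `ε → 0⁺`. -/
theorem stmt_7 (t : ℝ) (ht : 0 < t) (K : ℝ → ℝ) (hK : ContinuousOn K (Set.Icc 0 t))
    (A : ℝ → ℝ)
    (hA : ∀ s, A s = ∫ r in (0:ℝ)..s, Real.exp (2 * ∫ u in (0:ℝ)..r, K u)) :
    (∀ ε : ℝ, 0 < ε → ∃! r : ℝ, r ∈ Set.Ioo 0 t ∧ A r = A t / (1 + 2 * ε)) ∧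
    (∀ r : ℝ → ℝ, (∀ ε : ℝ, 0 < ε → r ε ∈ Set.Ioo 0 t ∧ A (r ε) = A t / (1 + 2 * ε)) →
      Tendsto (fun ε : ℝ => (t - r ε) / ε) (nhdsWithin 0 (Set.Ioi 0))
        (nhds (2 * ∫ u in (0:ℝ)..t, Real.exp (-(2 * ∫ τ in u..t, K τ))))) := by
  set g : ℝ → ℝ := fun r => Real.exp (2 * ∫ u in (0:ℝ)..r, K u)
  have hAg : A = fun s => ∫ x in (0:ℝ)..s, g x := funext hA
  have hg : ContinuousOn g (Icc 0 t) :=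
    Real.continuous_exp.comp_continuousOn
      (continuousOn_const.mul (hK.continuousOn_primitive_Icc ht.le))
  have hmono : StrictMonoOn A (Icc 0 t) :=
    hAg ▸ strictMonoOn_primitive_of_pos hg fun x _ => Real.exp_pos _
  have hcont : ContinuousOn A (Icc 0 t) := hAg ▸ hg.continuousOn_primitive_Icc ht.le
  have hA0 : A 0 = 0 := by simp [hA]
  have hAt : 0 < A t := hA0 ▸ hmono (left_mem_Icc.2 ht.le) (right_mem_Icc.2 ht.le) ht
  have hlevel : ∀ ε : ℝ, 0 < ε → A t / (1 + 2 * ε) ∈ Ioo (A 0) (A t) := fun ε hε =>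
    ⟨by rw [hA0]; positivity, div_lt_self hAt (by linarith)⟩
  refine ⟨fun ε hε => hmono.existsUnique_mem_Ioo_eq hcont ht.le (hlevel ε hε), fun r hr => ?_⟩
  have hr_eq : ∀ᶠ ε in 𝓝[>] 0, A (r ε) = A t / (1 + 2 * ε) :=
    eventually_nhdsWithin_of_forall fun ε hε => (hr ε hε).2
  have hlevel_lim : Tendsto (fun ε : ℝ => A t / (1 + 2 * ε)) (𝓝[>] 0) (𝓝 (A t)) := by
    have : ContinuousAt (fun ε : ℝ => A t / (1 + 2 * ε)) 0 := by fun_prop (disch := norm_num)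
    simpa using this.tendsto.mono_left nhdsWithin_le_nhds
  have hr_lim : Tendsto r (𝓝[>] 0) (𝓝[<] t) :=
    hmono.tendsto_nhdsLT_of_tendsto_comp
      (eventually_nhdsWithin_of_forall fun ε hε => Ioo_subset_Ico_self (hr ε hε).1)
      (hlevel_lim.congr' (hr_eq.mono fun ε h => h.symm))
  have hinv : Tendsto (fun ε => (t - r ε) / (A t - A (r ε))) (𝓝[>] 0) (𝓝 (g t)⁻¹) :=
    (hAg ▸ hasDerivWithinAt_primitive_Iic hg ht).tendsto_inv_slope (Real.exp_pos _).ne'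
      (by rwa [Iic_sdiff_right])
  have hdrop : Tendsto (fun ε => (A t - A (r ε)) / ε) (𝓝[>] 0) (𝓝 (2 * A t)) := by
    refine (hlevel_lim.const_mul 2).congr' ?_
    filter_upwards [hr_eq, self_mem_nhdsWithin] with ε hrε (hε : 0 < ε)
    rw [hrε]
    field_simp
    ring
  rw [integral_exp_neg_mul_integral_eq_div (hK.intervalIntegrable_of_Icc ht.le), ← hA]
  refine ((hinv.mul hdrop).congr' ?_).trans_eq ?_
  · filter_upwards [hr_eq, self_mem_nhdsWithin] with ε hrε hε
    have : A (r ε) < A t := hrε ▸ (hlevel ε hε).2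
    field_simp [sub_ne_zero_of_ne this.ne']
  · rw [mul_div_assoc', div_eq_inv_mul]
end

section
/- Let (X, 𝒜) be a measurable space, let μ and ν be probability measures on X, and let C ≥ 0. Suppose that for every p > 1 and every bounded measurable f : X → [0,∞), ( ∫ f dμ )^p ≤ ( ∫ f^p dν ) · exp( pC/(4(p−1)) ). Then for every bounded measurable f : X → ℝ with f ≥ 1, ∫ log f dμ ≤ log( ∫ f dν ) + C/4. -/
/-!
Apply the power-Harnack inequality to `f ^ (1/p)`: by Jensen's inequality for the concave
`log`, `∫ log f dμ = p ∫ log f ^ (1/p) dμ ≤ p log ∫ f ^ (1/p) dμ`, and the hypothesis bounds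
the right-hand side by `log ∫ f dν + pC/(4(p-1))`. Letting `p → ∞` gives the constant `C/4`.
-/

open MeasureTheory Filter Topology Real

section

variable {X : Type*} [MeasurableSpace X] {μ : Measure X}

theorem integral_log_le_log_integral [IsProbabilityMeasure μ] {f : X → ℝ}
    (hf : Integrable f μ) (hf1 : ∀ᵐ x ∂μ, 1 ≤ f x) :
    ∫ x, log (f x) ∂μ ≤ log (∫ x, f x ∂μ) := by
  have hlog : Integrable (log ∘ f) μ := by
    refine hf.mono (measurable_log.comp_aemeasurable hf.aemeasurable).aestronglyMeasurable ?_
    filter_upwards [hf1] with x hx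
    rw [Function.comp_apply, norm_of_nonneg (log_nonneg hx), norm_of_nonneg (by linarith)]
    exact (log_le_sub_one_of_pos (by linarith)).trans (by linarith)
  exact (strictConcaveOn_log_Ioi.concaveOn.subset (fun x (hx : 1 ≤ x) => by
      simp only [Set.mem_Ioi]; linarith) (convex_Ici 1)).le_map_integral
    (continuousOn_log.mono fun x (hx : 1 ≤ x) => by
      simp only [Set.mem_compl_iff, Set.mem_singleton_iff]; linarith)
    isClosed_Ici hf1 hf hlog

theorem integrable_of_nonneg_of_le [IsFiniteMeasure μ] {f : X → ℝ} (hf : Measurable f)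
    (hf0 : ∀ x, 0 ≤ f x) {b : ℝ} (hfb : ∀ x, f x ≤ b) : Integrable f μ :=
  .of_bound hf.aestronglyMeasurable b
    (ae_of_all _ fun x => (norm_of_nonneg (hf0 x)).trans_le (hfb x))

theorem rpow_inv_mem_Icc {x b p : ℝ} (hx : 1 ≤ x) (hxb : x ≤ b) (hp : 1 ≤ p) :
    x ^ p⁻¹ ∈ Set.Icc 1 b :=
  ⟨one_le_rpow hx (inv_nonneg.mpr (by linarith)),
    (rpow_le_self_of_one_le hx (inv_le_one_of_one_le₀ hp)).trans hxb⟩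

theorem integral_log_le_of_rpow_integral_le [IsProbabilityMeasure μ] {ν : Measure X}
    {f : X → ℝ} (hf : Measurable f) (hf1 : ∀ x, 1 ≤ f x) {b : ℝ} (hfb : ∀ x, f x ≤ b)
    {p K : ℝ} (hp : 1 ≤ p)
    (hharnack : (∫ x, f x ^ p⁻¹ ∂μ) ^ p ≤ (∫ x, f x ∂ν) * exp K) :
    ∫ x, log (f x) ∂μ ≤ log (∫ x, f x ∂ν) + K := by
  have hp0 : 0 < p := by linarith
  have hg1 : ∀ x, 1 ≤ f x ^ p⁻¹ := fun x => (rpow_inv_mem_Icc (hf1 x) (hfb x) hp).1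
  have hgi : Integrable (fun x => f x ^ p⁻¹) μ :=
    integrable_of_nonneg_of_le (hf.pow_const _) (fun x => zero_le_one.trans (hg1 x))
      fun x => (rpow_inv_mem_Icc (hf1 x) (hfb x) hp).2
  have hJ : 0 < ∫ x, f x ^ p⁻¹ ∂μ := by
    have := integral_mono (integrable_const 1) hgi hg1
    simp only [integral_const, probReal_univ, one_smul] at this
    linarith
  have hJp : 0 < (∫ x, f x ^ p⁻¹ ∂μ) ^ p := rpow_pos_of_pos hJ p
  have hI : ∫ x, f x ∂ν ≠ 0 := by
    rintro hI
    rw [hI, zero_mul] at hharnack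
    linarith
  calc ∫ x, log (f x) ∂μ = p * ∫ x, log (f x ^ p⁻¹) ∂μ := by
        simp_rw [log_rpow (zero_lt_one.trans_le (hf1 _)), integral_const_mul, ← mul_assoc,
          mul_inv_cancel₀ hp0.ne', one_mul]
    _ ≤ p * log (∫ x, f x ^ p⁻¹ ∂μ) :=
        mul_le_mul_of_nonneg_left (integral_log_le_log_integral hgi (ae_of_all _ hg1)) hp0.le
    _ = log ((∫ x, f x ^ p⁻¹ ∂μ) ^ p) := (log_rpow hJ p).symm
    _ ≤ log ((∫ x, f x ∂ν) * exp K) := log_le_log hJp hharnack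
    _ = log (∫ x, f x ∂ν) + K := by rw [log_mul hI (exp_ne_zero K), log_exp]

theorem tendsto_mul_div_sub_one_atTop (C : ℝ) :
    Tendsto (fun p : ℝ => p * C / (4 * (p - 1))) atTop (𝓝 (C / 4)) := by
  have hsplit : ∀ᶠ p : ℝ in atTop, C / 4 + C / 4 / (p - 1) = p * C / (4 * (p - 1)) := by
    filter_upwards [eventually_gt_atTop 1] with p hp
    field_simp [(sub_pos.mpr hp).ne']
    ring
  have hsub : Tendsto (fun p : ℝ => p - 1) atTop atTop :=
    tendsto_atTop_add_const_right _ _ tendsto_id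
  simpa using (tendsto_const_nhds.add (tendsto_const_nhds.div_atTop hsub)).congr' hsplit

end

theorem stmt_9_general {X : Type*} [MeasurableSpace X] (μ ν : Measure X)
    [IsProbabilityMeasure μ] (C : ℝ)
    (H : ∀ p : ℝ, 1 < p → ∀ f : X → ℝ, Measurable f → (∀ x, 0 ≤ f x) →
      (∃ b : ℝ, ∀ x, f x ≤ b) →
      (∫ x, f x ∂μ) ^ p ≤ (∫ x, (f x) ^ p ∂ν) * Real.exp (p * C / (4 * (p - 1)))) :
    ∀ f : X → ℝ, Measurable f → (∀ x, 1 ≤ f x) → (∃ b : ℝ, ∀ x, f x ≤ b) →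
      ∫ x, Real.log (f x) ∂μ ≤ Real.log (∫ x, f x ∂ν) + C / 4 := by
  rintro f hf hf1 ⟨b, hfb⟩
  have hbound : ∀ᶠ p : ℝ in atTop,
      ∫ x, log (f x) ∂μ ≤ log (∫ x, f x ∂ν) + p * C / (4 * (p - 1)) := by
    filter_upwards [eventually_gt_atTop 1] with p hp
    have hg := fun x => rpow_inv_mem_Icc (hf1 x) (hfb x) hp.le
    refine integral_log_le_of_rpow_integral_le hf hf1 hfb hp.le ?_
    have := H p hp (fun x => f x ^ p⁻¹) (hf.pow_const _) (fun x => zero_le_one.trans (hg x).1)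
      ⟨b, fun x => (hg x).2⟩
    simpa only [← rpow_mul (zero_le_one.trans (hf1 _)), inv_mul_cancel₀ (by linarith : p ≠ 0),
      rpow_one] using this
  exact ge_of_tendsto ((tendsto_mul_div_sub_one_atTop C).const_add _) hbound

/-- Abstract content of the implication (3) ⇒ (4) in Theorem 4.3: if for all `p > 1` and all
bounded measurable `f ≥ 0` one has `(∫ f dμ)ᵖ ≤ (∫ fᵖ dν) · exp(pC/(4(p-1)))`, then for every
bounded measurable `f ≥ 1`, `∫ log f dμ ≤ log(∫ f dν) + C/4`. -/
theorem stmt_9 {X : Type*} [MeasurableSpace X] (μ ν : Measure X)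
    [IsProbabilityMeasure μ] [IsProbabilityMeasure ν] (C : ℝ) (hC : 0 ≤ C)
    (H : ∀ p : ℝ, 1 < p → ∀ f : X → ℝ, Measurable f → (∀ x, 0 ≤ f x) →
      (∃ b : ℝ, ∀ x, f x ≤ b) →
      (∫ x, f x ∂μ) ^ p ≤ (∫ x, (f x) ^ p ∂ν) * Real.exp (p * C / (4 * (p - 1)))) :
    ∀ f : X → ℝ, Measurable f → (∀ x, 1 ≤ f x) → (∃ b : ℝ, ∀ x, f x ≤ b) →
      ∫ x, Real.log (f x) ∂μ ≤ Real.log (∫ x, f x ∂ν) + C / 4 :=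
  stmt_9_general μ ν C H
end
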